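/- For every λ > 0 and every x ∈ ℝ, ∫_0^∞ e^{−λt} (4πt)^{−1/2} e^{−x²/(4t)} dt = e^{−|x|√λ}/(2√λ); that is, the Laplace transform in time of the Gauss kernel E(x, t) at λ equals G_λ(x) := e^{−√λ·|x|}/(2√λ). -/

import Mathlib

open MeasureTheory

/-- The Gauss kernel `E(x,t) = (4πt)^{−1/2} e^{−x²/(4t)}`. -/
noncomputable def gaussE (x t : ℝ) : ℝ :=
  (4 * Real.pi * t) ^ (-(1 : ℝ) / 2) * Real.exp (-x ^ 2 / (4 * t))

/-!
Substituting `t = u²` and completing the square turns the integral into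
`π^{-1/2} ∫₀^∞ exp (-(λu² + x²/(4u²))) du`
`= π^{-1/2} e^{-|x|√λ} ∫₀^∞ exp (-(√λ u - |x|/(2u))²) du`.
The last integral is Cauchy–Schlömilch's: for `a, b > 0` the inversion `u ↦ b/(au)` preserves
`(au - b/u)²` and has Jacobian `b/(au²)`, so twice the integral equals
`a⁻¹ ∫₀^∞ (a + b/u²) exp (-(au - b/u)²) du`; and `s = au - b/u` maps `(0, ∞)` onto
`ℝ` with `ds = (a + b/u²) du`, hence the integral is `√π/(2a)`.
-/

open Set Real

section ChangeOfVariables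

variable {E : Type*} [NormedAddCommGroup E] [NormedSpace ℝ E]

theorem integral_Ioi_comp_sq (g : ℝ → E) :
    ∫ u in Ioi (0 : ℝ), (2 * u) • g (u ^ 2) = ∫ t in Ioi (0 : ℝ), g t := by
  have himage : (fun u : ℝ => u ^ 2) '' Ioi 0 = Ioi 0 := by
    ext t
    exact ⟨fun ⟨u, (hu : 0 < u), hut⟩ => hut ▸ pow_pos hu 2,
      fun (ht : 0 < t) => ⟨√t, sqrt_pos.2 ht, sq_sqrt ht.le⟩⟩
  have h := integral_image_eq_integral_abs_deriv_smul measurableSet_Ioi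
    (fun u _ => by simpa using (hasDerivAt_pow 2 u).hasDerivWithinAt)
    ((pow_left_strictMonoOn₀ two_ne_zero).injOn.mono fun u (hu : 0 < u) => hu.le) g
  rw [himage] at h
  rw [h]
  refine setIntegral_congr_fun measurableSet_Ioi fun u (hu : 0 < u) => ?_
  simp only [abs_of_pos (by positivity : 0 < 2 * u)]

theorem integral_Ioi_comp_div {c : ℝ} (hc : 0 < c) (g : ℝ → E) :
    ∫ u in Ioi (0 : ℝ), (c / u ^ 2) • g (c / u) = ∫ u in Ioi (0 : ℝ), g u := by
  have himage : (fun u : ℝ => c / u) '' Ioi 0 = Ioi 0 := by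
    ext t
    refine ⟨fun ⟨u, (hu : 0 < u), hut⟩ => hut ▸ div_pos hc hu,
      fun (ht : 0 < t) => ⟨c / t, div_pos hc ht, ?_⟩⟩
    field_simp
  have hinj : InjOn (fun u : ℝ => c / u) (Ioi 0) := fun u _ v _ huv => by
    simpa [div_div_cancel₀ hc.ne'] using congrArg (c / ·) huv
  have h := integral_image_eq_integral_abs_deriv_smul measurableSet_Ioi
    (fun u (hu : 0 < u) => by
      simpa [div_eq_mul_inv] using ((hasDerivAt_inv hu.ne').const_mul c).hasDerivWithinAt)
    hinj g
  rw [himage] at h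
  rw [h]
  refine setIntegral_congr_fun measurableSet_Ioi fun u (hu : 0 < u) => ?_
  rw [abs_neg, abs_of_pos (by positivity), div_eq_mul_inv]

end ChangeOfVariables

section CauchySchlomilch

variable {a b : ℝ}

theorem strictMonoOn_mul_sub_div (ha : 0 < a) (hb : 0 ≤ b) :
    StrictMonoOn (fun u => a * u - b / u) (Ioi 0) := fun u (hu : 0 < u) v _ huv => by
  show a * u - b / u < a * v - b / v
  linarith [div_le_div_of_nonneg_left hb hu huv.le, mul_lt_mul_of_pos_left huv ha]

theorem image_mul_sub_div_Ioi (ha : 0 < a) (hb : 0 < b) :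
    (fun u => a * u - b / u) '' Ioi 0 = univ := by
  refine eq_univ_of_forall fun s => ?_
  -- the positive root of `a u ^ 2 - s u - b`
  set r := √(s ^ 2 + 4 * a * b)
  have hr : r ^ 2 = s ^ 2 + 4 * a * b := sq_sqrt (by positivity)
  have hsr : 0 < s + r := by
    have := (abs_lt.1 (abs_lt_of_sq_lt_sq (show s ^ 2 < r ^ 2 by nlinarith) (sqrt_nonneg _))).1
    linarith
  refine ⟨(s + r) / (2 * a), show 0 < (s + r) / (2 * a) by positivity, ?_⟩
  field_simp
  linear_combination hr

theorem hasDerivAt_mul_sub_div {u : ℝ} (hu : u ≠ 0) :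
    HasDerivAt (fun u => a * u - b / u) (a + b / u ^ 2) u := by
  have hinv : HasDerivAt (fun u => b / u) (-(b / u ^ 2)) u := by
    simpa [div_eq_mul_inv] using (hasDerivAt_inv hu).const_mul b
  simpa using (hasDerivAt_const_mul a).fun_sub hinv

theorem integrableOn_add_div_sq_mul_exp_neg_sq_mul_sub_div (ha : 0 < a) (hb : 0 < b) :
    IntegrableOn (fun u => (a + b / u ^ 2) * exp (-(a * u - b / u) ^ 2)) (Ioi 0) := by
  have h := integrableOn_image_iff_integrableOn_abs_deriv_smul measurableSet_Ioi
    (fun u (hu : 0 < u) => (hasDerivAt_mul_sub_div hu.ne').hasDerivWithinAt)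
    (strictMonoOn_mul_sub_div ha hb.le).injOn fun s => exp (-s ^ 2)
  rw [image_mul_sub_div_Ioi ha hb, integrableOn_univ] at h
  refine (h.1 (by simpa using integrable_exp_neg_mul_sq one_pos)).congr_fun
    (fun u (hu : 0 < u) => ?_) measurableSet_Ioi
  simp only [smul_eq_mul, abs_of_pos (by positivity : 0 < a + b / u ^ 2)]

theorem integral_add_div_sq_mul_exp_neg_sq_mul_sub_div (ha : 0 < a) (hb : 0 < b) :
    ∫ u in Ioi 0, (a + b / u ^ 2) * exp (-(a * u - b / u) ^ 2) = √π := by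
  have h := integral_image_eq_integral_abs_deriv_smul measurableSet_Ioi
    (fun u (hu : 0 < u) => (hasDerivAt_mul_sub_div hu.ne').hasDerivWithinAt)
    (strictMonoOn_mul_sub_div ha hb.le).injOn fun s => exp (-s ^ 2)
  rw [image_mul_sub_div_Ioi ha hb, setIntegral_univ] at h
  rw [← (by simpa using integral_gaussian 1 : ∫ s : ℝ, exp (-s ^ 2) = √π), h]
  refine setIntegral_congr_fun measurableSet_Ioi fun u (hu : 0 < u) => ?_
  simp only [smul_eq_mul, abs_of_pos (by positivity : 0 < a + b / u ^ 2)]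

theorem integral_div_sq_mul_exp_neg_sq_mul_sub_div (ha : 0 < a) (hb : 0 < b) :
    ∫ u in Ioi 0, b / u ^ 2 * exp (-(a * u - b / u) ^ 2) =
      a * ∫ u in Ioi 0, exp (-(a * u - b / u) ^ 2) := by
  rw [← integral_Ioi_comp_div (div_pos hb ha), ← integral_const_mul]
  refine setIntegral_congr_fun measurableSet_Ioi fun u (hu : 0 < u) => ?_
  have hswap : (a * (b / a / u) - b / (b / a / u)) ^ 2 = (a * u - b / u) ^ 2 := by
    field_simp
    ring
  rw [smul_eq_mul, hswap]
  field_simp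

theorem integral_exp_neg_sq_mul_sub_div (ha : 0 < a) (hb : 0 ≤ b) :
    ∫ u in Ioi 0, exp (-(a * u - b / u) ^ 2) = √π / (2 * a) := by
  rcases hb.eq_or_lt with rfl | hb
  · simp_rw [zero_div, sub_zero, mul_pow, ← neg_mul, integral_gaussian_Ioi,
      sqrt_div pi_pos.le, sqrt_sq ha.le]
    ring
  have hint := integrableOn_add_div_sq_mul_exp_neg_sq_mul_sub_div ha hb
  have hint_exp : IntegrableOn (fun u => exp (-(a * u - b / u) ^ 2)) (Ioi 0) := by
    refine (hint.div_const a).mono' (by fun_prop : Measurable _).aestronglyMeasurable ?_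
    refine (ae_restrict_iff' measurableSet_Ioi).2
      (Filter.Eventually.of_forall fun u (hu : 0 < u) => ?_)
    rw [norm_of_nonneg (exp_pos _).le, le_div_iff₀ ha, mul_comm]
    gcongr
    exact le_add_of_nonneg_right (by positivity)
  have hint_div : IntegrableOn (fun u => b / u ^ 2 * exp (-(a * u - b / u) ^ 2)) (Ioi 0) :=
    (hint.sub (hint_exp.const_mul a)).congr_fun (fun u _ => by simp only [Pi.sub_apply]; ring)
      measurableSet_Ioi
  have h := integral_add_div_sq_mul_exp_neg_sq_mul_sub_div ha hb
  simp_rw [add_mul] at h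
  rw [integral_add (hint_exp.const_mul a) hint_div, integral_const_mul,
    integral_div_sq_mul_exp_neg_sq_mul_sub_div ha hb] at h
  rw [eq_div_iff (by positivity), ← h]
  ring

end CauchySchlomilch

theorem gaussE_sq (x : ℝ) {u : ℝ} (hu : 0 < u) :
    gaussE x (u ^ 2) = exp (-x ^ 2 / (4 * u ^ 2)) / (2 * √π * u) := by
  have h : 4 * π * u ^ 2 = (2 * √π * u) ^ 2 := by
    rw [mul_pow, mul_pow, sq_sqrt pi_pos.le]; ring
  rw [gaussE, h, neg_div, rpow_neg (sq_nonneg _), ← sqrt_eq_rpow, sqrt_sq (by positivity),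
    inv_mul_eq_div]

theorem mul_sq_add_sq_div_eq (x : ℝ) {l u : ℝ} (hl : 0 ≤ l) (hu : u ≠ 0) :
    l * u ^ 2 + x ^ 2 / (4 * u ^ 2) = (√l * u - |x| / 2 / u) ^ 2 + |x| * √l := by
  rw [← sq_abs x]
  nth_rw 1 [← sq_sqrt hl]
  field_simp
  ring

/-- The Laplace transform in time of the Gauss kernel:
`∫_0^∞ e^{−λt} E(x,t) dt = e^{−|x|√λ}/(2√λ)` for `λ > 0`, `x ∈ ℝ`. -/
theorem stmt15 (l : ℝ) (hl : 0 < l) (x : ℝ) :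
    (∫ t in Set.Ioi (0 : ℝ), Real.exp (-l * t) * gaussE x t) =
      Real.exp (-|x| * Real.sqrt l) / (2 * Real.sqrt l) := by
  have hsl : 0 < √l := sqrt_pos.2 hl
  rw [← integral_Ioi_comp_sq]
  calc ∫ u in Ioi 0, (2 * u) • (exp (-l * u ^ 2) * gaussE x (u ^ 2))
      = ∫ u in Ioi 0, exp (-|x| * √l) / √π * exp (-(√l * u - |x| / 2 / u) ^ 2) := by
        refine setIntegral_congr_fun measurableSet_Ioi fun u (hu : 0 < u) => ?_
        rw [smul_eq_mul, gaussE_sq x hu]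
        have hexp : exp (-l * u ^ 2) * exp (-x ^ 2 / (4 * u ^ 2)) =
            exp (-|x| * √l) * exp (-(√l * u - |x| / 2 / u) ^ 2) := by
          rw [← exp_add, ← exp_add]
          congr 1
          linear_combination -mul_sq_add_sq_div_eq x hl.le hu.ne'
        rw [div_mul_eq_mul_div, ← hexp]
        field_simp
    _ = exp (-|x| * √l) / √π * (√π / (2 * √l)) := by
        rw [integral_const_mul, integral_exp_neg_sq_mul_sub_div hsl (by positivity)]
    _ = exp (-|x| * √l) / (2 * √l) := by
        field_simp
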